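/- Let A be an m×m real positive semidefinite matrix with A ⪯ I, and let B be an m×m real symmetric matrix. Then ‖A^{1/2} B A^{1/2}‖_F ≤ ‖A^{1/4} B A^{1/4}‖_F. -/

import Mathlib

set_option autoImplicit false

open Matrix Set Filter

attribute [local instance] Matrix.normedAddCommGroup Matrix.normedSpace

namespace BoxSDP

open scoped Classical

/-- Trace inner product `⟨A|B⟩ = Trace(Aᵀ B)`. -/
noncomputable def mip {m k : Type*} [Fintype m] [Fintype k]
    (A B : Matrix m k ℝ) : ℝ :=
  (Aᵀ * B).trace

/-- Frobenius norm `‖A‖_F = √⟨A|A⟩`. -/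
noncomputable def fnorm {m k : Type*} [Fintype m] [Fintype k]
    (A : Matrix m k ℝ) : ℝ :=
  Real.sqrt (mip A A)

/-- The feasible set `F = {X : O ⪯ X ⪯ I}` (membership forces symmetry). -/
def Feas (n : ℕ) : Set (Matrix (Fin n) (Fin n) ℝ) :=
  {X | X.PosSemidef ∧ (1 - X).PosSemidef}

/-- Square root of a positive semidefinite matrix (junk value `0` otherwise);
agrees with `A^{1/2} = Q K^{1/2} Qᵀ` on positive semidefinite matrices. -/
noncomputable def psqrt {m : Type*} [Fintype m] [DecidableEq m]
    (A : Matrix m m ℝ) : Matrix m m ℝ :=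
  if h : A.PosSemidef then
    h.1.eigenvectorUnitary.1 * Matrix.diagonal ((RCLike.ofReal : ℝ → ℝ) ∘ Real.sqrt ∘ h.1.eigenvalues)
      * (star h.1.eigenvectorUnitary : Matrix m m ℝ)
  else 0

/-- Fourth root `A^{1/4}` of a positive semidefinite matrix. -/
noncomputable def proot4 {m : Type*} [Fintype m] [DecidableEq m]
    (A : Matrix m m ℝ) : Matrix m m ℝ :=
  psqrt (psqrt A)

/-- The 2-norm of a symmetric matrix: its largest absolute eigenvalue. -/
noncomputable def norm2 {m : Type*} [Fintype m] [DecidableEq m]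
    (A : Matrix m m ℝ) : ℝ :=
  if h : A.IsHermitian then sSup (Set.range fun i => |h.eigenvalues i|) else 0

/-- The linear functional `H ↦ ⟨G|H⟩`, as a continuous linear map; a function
`f` has gradient matrix `G` at `X` iff `HasFDerivAt f (gradCLM G) X`. -/
noncomputable def gradCLM {n : ℕ} (G : Matrix (Fin n) (Fin n) ℝ) :
    Matrix (Fin n) (Fin n) ℝ →L[ℝ] ℝ :=
  LinearMap.toContinuousLinearMap
    { toFun := fun H => mip G H
      map_add' := fun x y => by
        simp [mip, Matrix.mul_add]
      map_smul' := fun c x => by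
        simp [mip, Matrix.mul_smul] }

/-- The Hessian bilinear form `⟨A | ∇²f(X) | B⟩` induced by the derivative
`hessOp` of the gradient map. -/
noncomputable def hform {n : ℕ}
    (hessOp : Matrix (Fin n) (Fin n) ℝ →L[ℝ] Matrix (Fin n) (Fin n) ℝ)
    (A B : Matrix (Fin n) (Fin n) ℝ) : ℝ :=
  mip A (hessOp B)

/-- `underline-f`: the minimum of `⟨G | Y − X̂⟩` over `Y ∈ F`. -/
noncomputable def underf {n : ℕ} (G Xh : Matrix (Fin n) (Fin n) ℝ) : ℝ :=
  sInf ((fun Y => mip G (Y - Xh)) '' Feas n)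

/-- First-order optimality condition at `Xs` for gradient matrix `G`. -/
def FirstOrderOpt {n : ℕ} (G Xs : Matrix (Fin n) (Fin n) ℝ) : Prop :=
  ∀ X ∈ Feas n, 0 ≤ mip G (X - Xs)

/-- A fixed eigenvalue decomposition `G = P Γ Pᵀ` of a symmetric matrix `G`,
with eigenvalues in descending order, split into the block `Pp, gp` of
positive eigenvalues and the block `Pm, gm` of nonpositive eigenvalues. -/
structure SpecDecomp (n : ℕ) (G : Matrix (Fin n) (Fin n) ℝ) where
  np : ℕ
  nm : ℕ
  hdim : np + nm = n
  Pp : Matrix (Fin n) (Fin np) ℝ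
  Pm : Matrix (Fin n) (Fin nm) ℝ
  gp : Fin np → ℝ
  gm : Fin nm → ℝ
  hgp_pos : ∀ i, 0 < gp i
  hgm_nonpos : ∀ j, gm j ≤ 0
  hgp_anti : ∀ i j : Fin np, i ≤ j → gp j ≤ gp i
  hgm_anti : ∀ i j : Fin nm, i ≤ j → gm j ≤ gm i
  hPp_orth : Ppᵀ * Pp = 1
  hPm_orth : Pmᵀ * Pm = 1
  hPpPm : Ppᵀ * Pm = 0
  hPPT : Pp * Ppᵀ + Pm * Pmᵀ = 1
  hG : G = Pp * Matrix.diagonal gp * Ppᵀ + Pm * Matrix.diagonal gm * Pmᵀ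

namespace SpecDecomp

variable {n : ℕ} {G : Matrix (Fin n) (Fin n) ℝ}

/-- `V₊(X) = P₊ᵀ X P₊`. -/
def Vp (sd : SpecDecomp n G) (X : Matrix (Fin n) (Fin n) ℝ) :
    Matrix (Fin sd.np) (Fin sd.np) ℝ :=
  sd.Ppᵀ * X * sd.Pp

/-- `V₋(X) = P₋ᵀ (I − X) P₋`. -/
def Vm (sd : SpecDecomp n G) (X : Matrix (Fin n) (Fin n) ℝ) :
    Matrix (Fin sd.nm) (Fin sd.nm) ℝ :=
  sd.Pmᵀ * (1 - X) * sd.Pm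

/-- The search direction `D(X) = P M Pᵀ` with blocks
`M₁₁ = V₊^{1/2} Γ₊ V₊^{1/2}`, `M₁₂ = γ_max P₊ᵀ X P₋`,
`M₂₁ = γ_max P₋ᵀ X P₊`, `M₂₂ = V₋^{1/2} Γ₋ V₋^{1/2}`. -/
noncomputable def Dmat (sd : SpecDecomp n G) (X : Matrix (Fin n) (Fin n) ℝ) :
    Matrix (Fin n) (Fin n) ℝ :=
  sd.Pp * (psqrt (sd.Vp X) * Matrix.diagonal sd.gp * psqrt (sd.Vp X)) * sd.Ppᵀ
    + norm2 G • (sd.Pp * (sd.Ppᵀ * X * sd.Pm) * sd.Pmᵀ)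
    + norm2 G • (sd.Pm * (sd.Pmᵀ * X * sd.Pp) * sd.Ppᵀ)
    + sd.Pm * (psqrt (sd.Vm X) * Matrix.diagonal sd.gm * psqrt (sd.Vm X)) * sd.Pmᵀ

/-- `N(X) = ⟨G | D(X)⟩`. -/
noncomputable def Nval (sd : SpecDecomp n G) (X : Matrix (Fin n) (Fin n) ℝ) : ℝ :=
  mip G (sd.Dmat X)

end SpecDecomp

/-! Square roots preserve `0 ⪯ · ⪯ I`, so `S = A^{1/4}` satisfies `0 ⪯ S ⪯ I`, and
`A^{1/2} B A^{1/2} = S (S B S) S`. Multiplying by such an `S` on either side does not increase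
the Frobenius norm, because `‖S X‖_F² = Tr(Xᵀ S² X)` and `S² ⪯ I`. -/

section FrobeniusContraction

variable {n k : Type*} [Fintype n] [Fintype k]

lemma fnorm_transpose (X : Matrix n k ℝ) : fnorm Xᵀ = fnorm X := by
  rw [fnorm, fnorm, mip, mip, transpose_transpose, trace_mul_comm]

variable [DecidableEq n]

lemma posSemidef_psqrt {A : Matrix n n ℝ} (hA : A.PosSemidef) : (psqrt A).PosSemidef := by
  rw [psqrt, dif_pos hA]
  simpa [star_eq_conjTranspose] using
    (PosSemidef.diagonal fun i => by simp [Real.sqrt_nonneg]).mul_mul_conjTranspose_same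
      (hA.1.eigenvectorUnitary : Matrix n n ℝ)

lemma psqrt_mul_self {A : Matrix n n ℝ} (hA : A.PosSemidef) : psqrt A * psqrt A = A := by
  conv_rhs => rw [hA.1.spectral_theorem, Unitary.conjStarAlgAut_apply]
  rw [psqrt, dif_pos hA]
  set U : Matrix n n ℝ := (hA.1.eigenvectorUnitary : Matrix n n ℝ)
  have hU : star U * U = 1 := Unitary.coe_star_mul_self _
  set D := diagonal ((RCLike.ofReal : ℝ → ℝ) ∘ Real.sqrt ∘ hA.1.eigenvalues)
  have hD : D * D = diagonal ((RCLike.ofReal : ℝ → ℝ) ∘ hA.1.eigenvalues) := by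
    rw [diagonal_mul_diagonal]
    congr 1
    ext i
    simp [Real.mul_self_sqrt (hA.eigenvalues_nonneg i)]
  calc U * D * star U * (U * D * star U) = U * (D * (star U * U) * D) * star U := by
        simp only [Matrix.mul_assoc]
    _ = _ := by rw [hU, Matrix.mul_one, hD]

lemma one_sub_mul_self_posSemidef {S : Matrix n n ℝ} (hS : S.PosSemidef)
    (hSI : (1 - S).PosSemidef) : (1 - S * S).PosSemidef := by
  have hdecomp : 1 - S * S = (1 - S) + ((1 - S)ᴴ * S * (1 - S) + Sᴴ * (1 - S) * S) := by
    rw [hS.1.eq, hSI.1.eq]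
    noncomm_ring
  rw [hdecomp]
  exact hSI.add ((hS.conjTranspose_mul_mul_same _).add (hSI.conjTranspose_mul_mul_same _))

lemma one_sub_posSemidef_of_one_sub_mul_self {S : Matrix n n ℝ} (hS : S.PosSemidef)
    (hSSI : (1 - S * S).PosSemidef) : (1 - S).PosSemidef := by
  refine .of_dotProduct_mulVec_nonneg (isHermitian_one.sub hS.1) fun x => ?_
  have hST : Sᵀ = S := by rw [← conjTranspose_eq_transpose_of_trivial, hS.1.eq]
  have hSx : (S *ᵥ x) ⬝ᵥ (S *ᵥ x) ≤ x ⬝ᵥ x := by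
    have := hSSI.dotProduct_mulVec_nonneg x
    rw [star_trivial, sub_mulVec, one_mulVec, dotProduct_sub, ← mulVec_mulVec,
      dotProduct_mulVec, ← mulVec_transpose, hST] at this
    linarith
  have hcs : (x ⬝ᵥ S *ᵥ x) ^ 2 ≤ (x ⬝ᵥ x) * ((S *ᵥ x) ⬝ᵥ (S *ᵥ x)) := by
    simpa [dotProduct, sq] using Finset.sum_mul_sq_le_sq_mul_sq Finset.univ x (S *ᵥ x)
  have hx : 0 ≤ x ⬝ᵥ x := Finset.sum_nonneg fun i _ => mul_self_nonneg (x i)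
  have hxSx : 0 ≤ x ⬝ᵥ S *ᵥ x := by simpa using hS.dotProduct_mulVec_nonneg x
  rw [star_trivial, sub_mulVec, one_mulVec, dotProduct_sub, sub_nonneg]
  nlinarith

lemma one_sub_psqrt_posSemidef {A : Matrix n n ℝ} (hA : A.PosSemidef)
    (hAI : (1 - A).PosSemidef) : (1 - psqrt A).PosSemidef :=
  one_sub_posSemidef_of_one_sub_mul_self (posSemidef_psqrt hA) (by rwa [psqrt_mul_self hA])

lemma fnorm_mul_left_le {S : Matrix n n ℝ} (hS : S.PosSemidef) (hSI : (1 - S).PosSemidef)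
    (X : Matrix n k ℝ) : fnorm (S * X) ≤ fnorm X := by
  have hST : Sᵀ = S := by rw [← conjTranspose_eq_transpose_of_trivial, hS.1.eq]
  have hgap : mip X X - mip (S * X) (S * X) = (Xᵀ * (1 - S * S) * X).trace := by
    rw [mip, mip, transpose_mul, hST, ← trace_sub]
    congr 1
    simp only [Matrix.mul_sub, Matrix.sub_mul, Matrix.mul_one, Matrix.mul_assoc]
  have hgap_nonneg : 0 ≤ (Xᵀ * (1 - S * S) * X).trace := by
    simpa [conjTranspose_eq_transpose_of_trivial] using
      ((one_sub_mul_self_posSemidef hS hSI).conjTranspose_mul_mul_same X).trace_nonneg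
  exact Real.sqrt_le_sqrt (by linarith)

lemma fnorm_mul_right_le {S : Matrix n n ℝ} (hS : S.PosSemidef) (hSI : (1 - S).PosSemidef)
    (X : Matrix k n ℝ) : fnorm (X * S) ≤ fnorm X := by
  have hST : Sᵀ = S := by rw [← conjTranspose_eq_transpose_of_trivial, hS.1.eq]
  calc fnorm (X * S) = fnorm (S * Xᵀ) := by rw [← fnorm_transpose, transpose_mul, hST]
    _ ≤ fnorm Xᵀ := fnorm_mul_left_le hS hSI Xᵀ
    _ = fnorm X := fnorm_transpose X

end FrobeniusContraction

theorem fnorm_sqrt_conj_le_fnorm_root4_conj_general {m : ℕ}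
    (A B : Matrix (Fin m) (Fin m) ℝ)
    (hA : A.PosSemidef) (hAI : (1 - A).PosSemidef) :
    fnorm (psqrt A * B * psqrt A) ≤ fnorm (proot4 A * B * proot4 A) := by
  have hR := posSemidef_psqrt hA
  set S := proot4 A
  have hS : S.PosSemidef := posSemidef_psqrt hR
  have hSI : (1 - S).PosSemidef :=
    one_sub_psqrt_posSemidef hR (one_sub_psqrt_posSemidef hA hAI)
  have hSS : psqrt A = S * S := (psqrt_mul_self hR).symm
  calc fnorm (psqrt A * B * psqrt A) = fnorm (S * (S * B * S * S)) := by
        rw [hSS]; simp only [Matrix.mul_assoc]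
    _ ≤ fnorm (S * B * S * S) := fnorm_mul_left_le hS hSI _
    _ ≤ fnorm (S * B * S) := fnorm_mul_right_le hS hSI _

theorem fnorm_sqrt_conj_le_fnorm_root4_conj {m : ℕ}
    (A B : Matrix (Fin m) (Fin m) ℝ)
    (hA : A.PosSemidef) (hAI : (1 - A).PosSemidef) (hB : B.IsSymm) :
    fnorm (psqrt A * B * psqrt A) ≤ fnorm (proot4 A * B * proot4 A) :=
  fnorm_sqrt_conj_le_fnorm_root4_conj_general A B hA hAI

end BoxSDP
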